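/- arXiv:1011.6614 — 2 statements merged into one kernel-verified Lean document; each statement's English description precedes it below -/
import Mathlib

section
/- Let k ≥ 1 and S = ℂ⟦x,y,t₁,…,t_k⟧ (an integral domain of Krull dimension k+2). Let G ∈ S with G ≠ 0, and let J ⊆ S be an ideal such that the Krull dimension of S/J is at most k. If the product ideal ⟨G⟩·J is a radical ideal and every minimal prime p of ⟨G⟩·J satisfies dim S/p = k+1, then J = S; in particular ⟨G⟩·J = ⟨G⟩ and ⟨G⟩ is a radical ideal. -/
/-!
Every minimal prime `P` of `⟨G⟩·J` contains `⟨G⟩` or `J`; the second is impossible, since then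
`dim S/P ≤ dim S/J ≤ k < k + 1`. So `G` lies in every minimal prime, hence in the radical of
`⟨G⟩·J`, which is `⟨G⟩·J` itself. Writing `G = G·z` with `z ∈ J` and cancelling `G` gives `1 ∈ J`.
-/

theorem ringKrullDim_quotient_le_of_le {R : Type*} [CommRing R] {I J : Ideal R} (h : I ≤ J) :
    ringKrullDim (R ⧸ J) ≤ ringKrullDim (R ⧸ I) :=
  ringKrullDim_le_of_surjective _ (Ideal.Quotient.factor_surjective h)

namespace Ideal

variable {R : Type*} [CommRing R] {G : R} {J P : Ideal R}

theorem mem_of_mem_minimalPrimes_span_singleton_mul (hP : P ∈ (span {G} * J).minimalPrimes)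
    (hJP : ¬J ≤ P) : G ∈ P :=
  (hP.1.1.mul_le.mp hP.1.2).resolve_right hJP (mem_span_singleton_self G)

theorem eq_top_of_self_mem_span_singleton_mul (hG : IsLeftRegular G) (hGJ : G ∈ span {G} * J) :
    J = ⊤ := by
  obtain ⟨z, hzJ, hGz⟩ := mem_span_singleton_mul.mp hGJ
  have hz : z = 1 := hG (hGz.trans (mul_one G).symm)
  exact (eq_top_iff_one J).mpr (hz ▸ hzJ)

theorem eq_top_of_isRadical_span_singleton_mul (hG : IsLeftRegular G)
    (hrad : (span {G} * J).IsRadical)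
    (hJ : ∀ P ∈ (span {G} * J).minimalPrimes, ¬J ≤ P) : J = ⊤ := by
  have hGrad : G ∈ (span {G} * J).radical := by
    rw [← sInf_minimalPrimes]
    exact mem_sInf.mpr fun {P} hP => mem_of_mem_minimalPrimes_span_singleton_mul hP (hJ P hP)
  exact eq_top_of_self_mem_span_singleton_mul hG (hrad.radical ▸ hGrad)

end Ideal

theorem reduced_pure_dimensional_total_space_forces_unit_embedded_part_general
    (k : ℕ)
    (G : MvPowerSeries (Fin 2 ⊕ Fin k) ℂ) (hG : G ≠ 0)
    (J : Ideal (MvPowerSeries (Fin 2 ⊕ Fin k) ℂ))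
    (hJdim : ringKrullDim (MvPowerSeries (Fin 2 ⊕ Fin k) ℂ ⧸ J) ≤ (k : WithBot ℕ∞))
    (hrad : (Ideal.span {G} * J).IsRadical)
    (hpure : ∀ P ∈ (Ideal.span {G} * J).minimalPrimes,
      ringKrullDim (MvPowerSeries (Fin 2 ⊕ Fin k) ℂ ⧸ P) = ((k + 1 : ℕ) : WithBot ℕ∞)) :
    J = ⊤ ∧ Ideal.span {G} * J = Ideal.span {G} ∧ (Ideal.span {G}).IsRadical := by
  have hJ : J = ⊤ := by
    refine Ideal.eq_top_of_isRadical_span_singleton_mul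
      (IsLeftCancelMulZero.mul_left_cancel_of_ne_zero hG) hrad fun P hP hJP => ?_
    have hdim := (ringKrullDim_quotient_le_of_le hJP).trans hJdim
    rw [hpure P hP] at hdim
    have : k + 1 ≤ k := by exact_mod_cast hdim
    omega
  subst hJ
  rw [Ideal.mul_top] at hrad ⊢
  exact ⟨rfl, rfl, hrad⟩

theorem reduced_pure_dimensional_total_space_forces_unit_embedded_part
    (k : ℕ) (hk : 1 ≤ k)
    (G : MvPowerSeries (Fin 2 ⊕ Fin k) ℂ) (hG : G ≠ 0)
    (J : Ideal (MvPowerSeries (Fin 2 ⊕ Fin k) ℂ))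
    (hJdim : ringKrullDim (MvPowerSeries (Fin 2 ⊕ Fin k) ℂ ⧸ J) ≤ (k : WithBot ℕ∞))
    (hrad : (Ideal.span {G} * J).IsRadical)
    (hpure : ∀ P ∈ (Ideal.span {G} * J).minimalPrimes,
      ringKrullDim (MvPowerSeries (Fin 2 ⊕ Fin k) ℂ ⧸ P) = ((k + 1 : ℕ) : WithBot ℕ∞)) :
    J = ⊤ ∧ Ideal.span {G} * J = Ideal.span {G} ∧ (Ideal.span {G}).IsRadical :=
  reduced_pure_dimensional_total_space_forces_unit_embedded_part_general k G hG J hJdim hrad hpure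
end

section
/- In R = ℂ⟦x,y⟧, let I₀ = ⟨x²−y³⟩ ∩ ⟨y⟩ ∩ ⟨x, y⁵⟩. Then the radical of I₀ equals ⟨x²−y³⟩ ∩ ⟨y⟩ = ⟨y·(x²−y³)⟩, and the ℂ-vector space √I₀/I₀ has dimension 1. -/
/-!
The cusp `f = x² - y³` generates the kernel of its parametrization `x ↦ t³, y ↦ t²`: reducing
modulo `f` via `x² ≡ y³` moves the coefficient of `xⁱyʲ` along the line `3i + 2j = const` down to
`i < 2`, and such a line sum is exactly a coefficient of the image in `ℂ⟦t⟧`. Hence `⟨f⟩` and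
`⟨y⟩` are prime, `⟨f⟩ ∩ ⟨y⟩ = ⟨yf⟩`, and since `(yf)² ∈ ⟨x, y⁵⟩` the radical of `I₀` is `⟨yf⟩`.
Finally `yf` times the maximal ideal lies in `I₀` while `yf ∉ ⟨x, y⁵⟩` (look at the coefficient of
`y⁴`), so `√I₀ / I₀` is the line spanned by the class of `yf`.
-/

noncomputable section

/-- The variable `x` of `R = ℂ⟦x,y⟧`. -/
def px : MvPowerSeries (Fin 2) ℂ := MvPowerSeries.X 0

/-- The variable `y` of `R = ℂ⟦x,y⟧`. -/
def py : MvPowerSeries (Fin 2) ℂ := MvPowerSeries.X 1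

/-- The ideal `I₀ = ⟨x²−y³⟩ ∩ ⟨y⟩ ∩ ⟨x,y⁵⟩` of `R = ℂ⟦x,y⟧`. -/
def I₀ : Ideal (MvPowerSeries (Fin 2) ℂ) :=
  Ideal.span {px ^ 2 - py ^ 3} ⊓ Ideal.span {py} ⊓
    Ideal.span {px, py ^ 5}

/-- The `ℂ`-vector space `A/B` for ideals of `R = ℂ⟦x,y⟧`: the quotient of `A`
by `A ∩ B`, with scalars restricted to `ℂ`. -/
def idealQuot (A B : Ideal (MvPowerSeries (Fin 2) ℂ)) : Type :=
  ↥(Submodule.restrictScalars ℂ A) ⧸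
    (Submodule.comap (Submodule.restrictScalars ℂ A).subtype (Submodule.restrictScalars ℂ B))

instance (A B : Ideal (MvPowerSeries (Fin 2) ℂ)) : AddCommGroup (idealQuot A B) :=
  inferInstanceAs (AddCommGroup (↥(Submodule.restrictScalars ℂ A) ⧸
    (Submodule.comap (Submodule.restrictScalars ℂ A).subtype (Submodule.restrictScalars ℂ B))))

instance (A B : Ideal (MvPowerSeries (Fin 2) ℂ)) : Module ℂ (idealQuot A B) :=
  inferInstanceAs (Module ℂ (↥(Submodule.restrictScalars ℂ A) ⧸
    (Submodule.comap (Submodule.restrictScalars ℂ A).subtype (Submodule.restrictScalars ℂ B))))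

open MvPowerSeries

namespace MvPowerSeries

variable {σ R : Type*} [CommRing R]

theorem coeff_X_pow_mul' [DecidableEq σ] (s : σ) (n : ℕ) (φ : MvPowerSeries σ R)
    (m : σ →₀ ℕ) :
    coeff m (X s ^ n * φ) = if n ≤ m s then coeff (m - Finsupp.single s n) φ else 0 := by
  simp only [X_pow_eq, coeff_monomial_mul, Finsupp.single_le_iff, one_mul]

theorem X_dvd_iff_one_le_weightedOrder [DecidableEq σ] (s : σ) (φ : MvPowerSeries σ R) :
    X s ∣ φ ↔ 1 ≤ φ.weightedOrder (Pi.single s 1) := by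
  have hweight (d : σ →₀ ℕ) : ((Finsupp.weight (Pi.single s 1) d : ℕ) : ℕ∞) < 1 ↔ d s = 0 := by
    rw [Finsupp.weight_single_one_apply, Nat.cast_lt_one]
  rw [X_dvd_iff]
  exact ⟨fun h => le_weightedOrder _ fun d hd => h d ((hweight d).mp hd),
    fun h d hd => coeff_eq_zero_of_lt_weightedOrder _ (((hweight d).mpr hd).trans_le h)⟩

theorem prime_X [IsDomain R] (s : σ) : Prime (X s : MvPowerSeries σ R) := by
  classical
  refine ⟨fun h => by simpa [h] using coeff_X (R := R) (Finsupp.single s 1) s,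
    fun h => by simpa using isUnit_iff_constantCoeff.mp h, fun a b hab => ?_⟩
  simpa only [X_dvd_iff_one_le_weightedOrder, weightedOrder_mul, Order.one_le_iff_ne_zero,
    ne_eq, add_eq_zero, not_and_or] using hab

end MvPowerSeries

section Cusp

open Finset

variable (R : Type*) [CommRing R]

def bideg (i j : ℕ) : Fin 2 →₀ ℕ := Finsupp.single 0 i + Finsupp.single 1 j

@[simp] lemma bideg_apply_zero (i j : ℕ) : bideg i j 0 = i := by simp [bideg]

@[simp] lemma bideg_apply_one (i j : ℕ) : bideg i j 1 = j := by simp [bideg]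

lemma bideg_eta (d : Fin 2 →₀ ℕ) : bideg (d 0) (d 1) = d := by
  ext s; fin_cases s <;> simp

def cusp : MvPowerSeries (Fin 2) R := X 0 ^ 2 - X 1 ^ 3

variable {R}

/-- Modulo `cusp R`, each monomial `x^(i+2k) y^(j-3k)` of this sum is congruent to `xⁱyʲ`. -/
def cuspLineSum (g : MvPowerSeries (Fin 2) R) (i j : ℕ) : R :=
  ∑ k ∈ range (j / 3 + 1), coeff (bideg (i + 2 * k) (j - 3 * k)) g

lemma cuspLineSum_eq (g : MvPowerSeries (Fin 2) R) (i j : ℕ) :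
    cuspLineSum g i j =
      coeff (bideg i j) g + if 3 ≤ j then cuspLineSum g (i + 2) (j - 3) else 0 := by
  rw [cuspLineSum, sum_range_succ', add_comm]
  split_ifs with hj
  · rw [cuspLineSum, show (j - 3) / 3 + 1 = j / 3 by omega]
    congr 1
    refine sum_congr rfl fun k _ => ?_
    rw [show i + 2 * (k + 1) = i + 2 + 2 * k by ring, show j - 3 * (k + 1) = j - 3 - 3 * k by omega]
  · simp [show j / 3 = 0 by omega]

def cuspQuot (g : MvPowerSeries (Fin 2) R) : MvPowerSeries (Fin 2) R :=
  fun d => cuspLineSum g (d 0 + 2) (d 1)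

lemma coeff_cuspQuot (g : MvPowerSeries (Fin 2) R) (d : Fin 2 →₀ ℕ) :
    coeff d (cuspQuot g) = cuspLineSum g (d 0 + 2) (d 1) := rfl

/-- Division by `cusp R` with a remainder supported on `i < 2`. -/
lemma coeff_cusp_mul_cuspQuot (g : MvPowerSeries (Fin 2) R) (d : Fin 2 →₀ ℕ) :
    coeff d (cusp R * cuspQuot g) =
      coeff d g - if d 0 < 2 then cuspLineSum g (d 0) (d 1) else 0 := by
  have key := cuspLineSum_eq g (d 0) (d 1)
  rw [bideg_eta] at key
  rw [cusp, sub_mul, map_sub, coeff_X_pow_mul', coeff_X_pow_mul', coeff_cuspQuot, coeff_cuspQuot]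
  simp only [Finsupp.coe_tsub, Pi.sub_apply, Finsupp.single_apply, Fin.isValue, zero_ne_one,
    one_ne_zero, if_true, if_false, Nat.sub_zero]
  split_ifs at key ⊢ with h2 <;> first
    | omega
    | rw [Nat.sub_add_cancel h2]; linear_combination key
    | linear_combination key

lemma cusp_dvd_of_cuspLineSum_eq_zero {g : MvPowerSeries (Fin 2) R}
    (h : ∀ i j, i < 2 → cuspLineSum g i j = 0) : cusp R ∣ g :=
  ⟨cuspQuot g, by
    ext d
    rw [coeff_cusp_mul_cuspQuot]
    split_ifs with hd
    · rw [h _ _ hd, sub_zero]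
    · rw [sub_zero]⟩

lemma hasSubst_cuspParam :
    HasSubst ![(PowerSeries.X : PowerSeries R) ^ 3, PowerSeries.X ^ 2] :=
  hasSubst_of_constantCoeff_zero fun s => by
    fin_cases s
    · exact (by simp : PowerSeries.constantCoeff (PowerSeries.X ^ 3 : PowerSeries R) = 0)
    · exact (by simp : PowerSeries.constantCoeff (PowerSeries.X ^ 2 : PowerSeries R) = 0)

variable (R) in
def cuspParam : MvPowerSeries (Fin 2) R →ₐ[R] PowerSeries R :=
  substAlgHom hasSubst_cuspParam

lemma cuspParam_cusp : cuspParam R (cusp R) = 0 := by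
  rw [cusp, map_sub, map_pow, map_pow, cuspParam, substAlgHom_X, substAlgHom_X]
  simp [← pow_mul]

lemma coeff_cuspParam (g : MvPowerSeries (Fin 2) R) (n : ℕ) :
    PowerSeries.coeff n (cuspParam R g) =
      ∑ᶠ d : Fin 2 →₀ ℕ, if 3 * d 0 + 2 * d 1 = n then coeff d g else 0 := by
  rw [cuspParam, coe_substAlgHom, PowerSeries.coeff, coeff_subst hasSubst_cuspParam]
  refine finsum_congr fun d => ?_
  simp [Finsupp.prod_fintype, Fin.prod_univ_two, ← pow_mul, ← pow_add, PowerSeries.coeff_X_pow,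
    eq_comm]

lemma coeff_cuspParam_of_lt_two (g : MvPowerSeries (Fin 2) R) {i : ℕ} (hi : i < 2) (j : ℕ) :
    PowerSeries.coeff (3 * i + 2 * j) (cuspParam R g) = cuspLineSum g i j := by
  rw [coeff_cuspParam, cuspLineSum, finsum_eq_sum_of_support_subset _
    (s := (range (j / 3 + 1)).image fun k => bideg (i + 2 * k) (j - 3 * k)), sum_image]
  · exact sum_congr rfl fun k hk => if_pos (by simp at hk; simp; omega)
  · intro k _ l _ hkl
    simpa using congrArg (· 0) hkl
  · intro d hd
    simp only [Function.mem_support, ne_eq, ite_eq_right_iff, not_forall] at hd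
    obtain ⟨hdeg, -⟩ := hd
    simp only [coe_image, coe_range, Set.mem_image, Set.mem_Iio]
    refine ⟨(d 0 - i) / 2, by omega, ?_⟩
    ext s; fin_cases s <;> simp <;> omega

theorem span_cusp_eq_ker_cuspParam : Ideal.span {cusp R} = RingHom.ker (cuspParam R) := by
  ext g
  rw [Ideal.mem_span_singleton, RingHom.mem_ker]
  constructor
  · rintro ⟨q, rfl⟩
    rw [map_mul, cuspParam_cusp, zero_mul]
  · refine fun h => cusp_dvd_of_cuspLineSum_eq_zero fun i j hi => ?_
    rw [← coeff_cuspParam_of_lt_two g hi, h, map_zero]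

theorem isPrime_span_cusp [IsDomain R] : (Ideal.span {cusp R}).IsPrime :=
  span_cusp_eq_ker_cuspParam (R := R) ▸ RingHom.ker_isPrime _

end Cusp

theorem Ideal.span_singleton_inf_span_singleton_of_prime {α : Type*} [CommSemiring α] {a p : α}
    (hp : Prime p) (ha : ¬p ∣ a) : span {a} ⊓ span {p} = span {p * a} := by
  refine le_antisymm (fun g hg => ?_) (le_inf (span_singleton_le_span_singleton.mpr
    (dvd_mul_left a p)) (span_singleton_le_span_singleton.mpr (dvd_mul_right p a)))
  obtain ⟨k, rfl⟩ := mem_span_singleton.mp hg.1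
  obtain ⟨l, rfl⟩ := (hp.dvd_or_dvd (mem_span_singleton.mp hg.2)).resolve_left ha
  exact mem_span_singleton.mpr ⟨l, by ring⟩

section Plane

variable {R : Type*} [CommRing R]

theorem exists_eq_X_zero_mul_add_X_one_mul {r : MvPowerSeries (Fin 2) R}
    (hr : constantCoeff r = 0) : ∃ a b, r = X 0 * a + X 1 * b := by
  let rY : MvPowerSeries (Fin 2) R := fun d => if d 0 = 0 then coeff d r else 0
  have hX : X 0 ∣ r - rY := X_dvd_iff.mpr fun d hd => by
    rw [map_sub, sub_eq_zero]
    exact (if_pos hd).symm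
  have hY : X 1 ∣ rY := X_dvd_iff.mpr fun d hd => by
    change (if d 0 = 0 then coeff d r else 0) = 0
    split_ifs with h0
    · rwa [show d = 0 by ext s; fin_cases s <;> assumption, coeff_zero_eq_constantCoeff_apply]
    · rfl
  obtain ⟨a, ha⟩ := hX
  obtain ⟨b, hb⟩ := hY
  exact ⟨a, b, by rw [← ha, ← hb, sub_add_cancel]⟩

theorem X_one_not_dvd_cusp [Nontrivial R] : ¬X 1 ∣ cusp R := fun h => by
  simpa [cusp, coeff_X_pow, Finsupp.ext_iff, Fin.forall_fin_two] using
    X_dvd_iff.mp h (bideg 2 0) (by simp)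

theorem coeff_bideg_zero_four_X_one_mul_cusp :
    coeff (bideg 0 4) (X 1 * cusp R) = -1 := by
  rw [cusp, mul_sub, ← pow_succ', map_sub, mul_comm,
    X_dvd_iff.mp (dvd_mul_of_dvd_left (dvd_pow_self _ two_ne_zero) _) _ (by simp)]
  simp [coeff_X_pow, Finsupp.ext_iff, Fin.forall_fin_two]

theorem coeff_bideg_zero_four_eq_zero_of_mem {g : MvPowerSeries (Fin 2) R}
    (hg : g ∈ Ideal.span {X 0, X 1 ^ 5}) : coeff (bideg 0 4) g = 0 := by
  obtain ⟨a, b, rfl⟩ := Ideal.mem_span_pair.mp hg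
  rw [map_add, mul_comm a, mul_comm b, X_dvd_iff.mp (dvd_mul_right _ _) _ (by simp),
    coeff_X_pow_mul', if_neg (by simp), add_zero]

end Plane

theorem finrank_idealQuot_span_singleton {w : MvPowerSeries (Fin 2) ℂ} {I : Ideal _}
    (hw : w ∉ I) (hmax : ∀ r, constantCoeff r = 0 → w * r ∈ I) :
    Module.finrank ℂ (idealQuot (Ideal.span {w}) I) = 1 := by
  set A := (Ideal.span {w}).restrictScalars ℂ
  set B := (I.restrictScalars ℂ).comap A.subtype
  change Module.finrank ℂ (A ⧸ B) = 1
  set v : A ⧸ B := Submodule.Quotient.mk ⟨w, Ideal.mem_span_singleton_self w⟩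
  have hv : v ≠ 0 := by
    rwa [Ne, Submodule.Quotient.mk_eq_zero]
  refine (finrank_eq_one_iff_of_nonzero' v hv).mpr fun u => ?_
  obtain ⟨⟨_, hg⟩, rfl⟩ := Submodule.Quotient.mk_surjective B u
  obtain ⟨r, rfl⟩ := Ideal.mem_span_singleton.mp hg
  refine ⟨constantCoeff r, ?_⟩
  rw [← Submodule.Quotient.mk_smul, Submodule.Quotient.eq]
  change constantCoeff r • w - w * r ∈ I
  rw [smul_eq_C_mul, show C (constantCoeff r) * w - w * r = -(w * (r - C (constantCoeff r))) by
    ring]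
  exact I.neg_mem (hmax _ (by simp))

theorem span_cusp_inf_span_py :
    Ideal.span {px ^ 2 - py ^ 3} ⊓ Ideal.span {py} = Ideal.span {py * (px ^ 2 - py ^ 3)} :=
  Ideal.span_singleton_inf_span_singleton_of_prime (prime_X 1) X_one_not_dvd_cusp

theorem radical_I₀ : I₀.radical = Ideal.span {px ^ 2 - py ^ 3} ⊓ Ideal.span {py} := by
  have hy : (Ideal.span {py}).IsPrime :=
    (Ideal.span_singleton_prime (prime_X 1).ne_zero).mpr (prime_X 1)
  rw [I₀, Ideal.radical_inf, Ideal.radical_inf, isPrime_span_cusp.radical, hy.radical, inf_eq_left,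
    span_cusp_inf_span_py, Ideal.span_singleton_le_iff_mem]
  exact ⟨2, Ideal.mem_span_pair.mpr ⟨px ^ 3 * py ^ 2 - 2 * px * py ^ 5, py ^ 3, by ring⟩⟩

theorem py_mul_cusp_not_mem_I₀ : py * (px ^ 2 - py ^ 3) ∉ I₀ := fun h => by
  simpa [coeff_bideg_zero_four_X_one_mul_cusp] using
    coeff_bideg_zero_four_eq_zero_of_mem (g := X 1 * cusp ℂ) h.2

theorem py_mul_cusp_mul_mem_I₀ {r : MvPowerSeries (Fin 2) ℂ} (hr : constantCoeff r = 0) :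
    py * (px ^ 2 - py ^ 3) * r ∈ I₀ := by
  obtain ⟨a, b, rfl⟩ := exists_eq_X_zero_mul_add_X_one_mul hr
  refine Ideal.mem_inf.mpr ⟨Ideal.mem_inf.mpr ⟨?_, ?_⟩, Ideal.mem_span_pair.mpr
    ⟨py * (px ^ 2 - py ^ 3) * a + px * py ^ 2 * b, -b, by simp only [px, py]; ring⟩⟩
  · exact Ideal.mul_mem_right _ _ (Ideal.mul_mem_left _ _ (Ideal.mem_span_singleton_self _))
  · exact Ideal.mul_mem_right _ _ (Ideal.mul_mem_right _ _ (Ideal.mem_span_singleton_self _))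

theorem radical_and_epsilon_of_example_one :
    I₀.radical = Ideal.span {px ^ 2 - py ^ 3} ⊓ Ideal.span {py} ∧
      Ideal.span {px ^ 2 - py ^ 3} ⊓ Ideal.span {py} =
        Ideal.span {py * (px ^ 2 - py ^ 3)} ∧
      Module.finrank ℂ (idealQuot I₀.radical I₀) = 1 := by
  refine ⟨radical_I₀, span_cusp_inf_span_py, ?_⟩
  rw [radical_I₀, span_cusp_inf_span_py]
  exact finrank_idealQuot_span_singleton py_mul_cusp_not_mem_I₀ fun _ => py_mul_cusp_mul_mem_I₀

end
end
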